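/- arXiv:1303.5237 — 5 statements merged into one kernel-verified Lean document; each statement's English description precedes it below -/
import Mathlib

section
/- For the block lower bidiagonal matrix g with identity diagonal blocks and subdiagonal blocks g_2,...,g_N (with g_1 := 0 and g_{N+1} := 0), every eigenvalue λ of gᵀg satisfies λ ≤ max_k { 1 + σ_max(g_{k+1})² + σ_max(g_k) + σ_max(g_{k+1}) }. -/
/-!
Write `x` in blocks `x_1, …, x_N` and put `x_0 = 0`, so that `(g x)_k = x_k + g_k x_{k-1}`.
With `σ_k = σ_max(g_k)`, Cauchy–Schwarz and AM-GM give
`‖x_k + g_k x_{k-1}‖² ≤ (1 + σ_k) ‖x_k‖² + (σ_k² + σ_k) ‖x_{k-1}‖²`.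
Summing over `k` and shifting the second sum by one index bounds `xᵀ gᵀ g x = ‖g x‖²` by the
stated maximum times `‖x‖²`, and for the symmetric matrix `gᵀ g` such a bound on the quadratic
form is the same as the bound on all eigenvalues.
-/

open Matrix

theorem Matrix.isHermitian_transpose_mul_self {m n α : Type*} [Fintype m] [CommSemiring α]
    [StarRing α] [TrivialStar α] (A : Matrix m n α) : (Aᵀ * A).IsHermitian := by
  rw [IsHermitian, conjTranspose_eq_transpose_of_trivial, transpose_mul, transpose_transpose]

/-- Block diagonal matrix with `N` diagonal blocks of size `n`. -/
def blkDiag {N n : ℕ} (q : Fin N → Matrix (Fin n) (Fin n) ℝ) :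
    Matrix (Fin N × Fin n) (Fin N × Fin n) ℝ :=
  fun p r => if p.1 = r.1 then q p.1 p.2 r.2 else 0

/-- Block lower bidiagonal matrix with identity diagonal blocks and subdiagonal
blocks; the block in position `(i, i-1)` (0-based) is `g (i+1)` (1-based paper index),
i.e. paper's `g_k` sits in (1-based) position `(k, k-1)` for `k = 2,…,N`. -/
def lowerBidiag (N n : ℕ) (g : ℕ → Matrix (Fin n) (Fin n) ℝ) :
    Matrix (Fin N × Fin n) (Fin N × Fin n) ℝ :=
  fun p r =>
    if p.1 = r.1 then (if p.2 = r.2 then 1 else 0)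
    else if (r.1 : ℕ) + 1 = (p.1 : ℕ) then g ((p.1 : ℕ) + 1) p.2 r.2
    else 0

/-- Minimum eigenvalue of a Hermitian real matrix. -/
noncomputable def lamMin {ι : Type*} [Fintype ι] [DecidableEq ι]
    (A : Matrix ι ι ℝ) (hA : A.IsHermitian) : ℝ := ⨅ i, hA.eigenvalues i

/-- Maximum eigenvalue of a Hermitian real matrix. -/
noncomputable def lamMax {ι : Type*} [Fintype ι] [DecidableEq ι]
    (A : Matrix ι ι ℝ) (hA : A.IsHermitian) : ℝ := ⨆ i, hA.eigenvalues i

/-- Minimum singular value: square root of the minimum eigenvalue of `Aᴴ * A`. -/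
noncomputable def sigMin {ι : Type*} [Fintype ι] [DecidableEq ι]
    (A : Matrix ι ι ℝ) : ℝ :=
  Real.sqrt (lamMin (Aᴴ * A) (isHermitian_transpose_mul_self A))

/-- Maximum singular value: square root of the maximum eigenvalue of `Aᴴ * A`. -/
noncomputable def sigMax {ι : Type*} [Fintype ι] [DecidableEq ι]
    (A : Matrix ι ι ℝ) : ℝ :=
  Real.sqrt (lamMax (Aᴴ * A) (isHermitian_transpose_mul_self A))

section DotProduct

variable {ι R : Type*} [Fintype ι] [CommSemiring R]

theorem Matrix.dotProduct_transpose_mul_self_mulVec {m : Type*} [Fintype m]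
    (A : Matrix m ι R) (x : ι → R) : x ⬝ᵥ ((Aᵀ * A) *ᵥ x) = (A *ᵥ x) ⬝ᵥ (A *ᵥ x) := by
  rw [← mulVec_mulVec, dotProduct_mulVec, vecMul_transpose]

variable [LinearOrder R] [IsStrictOrderedRing R] [ExistsAddOfLE R]

theorem dotProduct_self_nonneg (v : ι → R) : 0 ≤ v ⬝ᵥ v :=
  Finset.sum_nonneg fun i _ => mul_self_nonneg (v i)

theorem sq_dotProduct_le (u w : ι → R) : (u ⬝ᵥ w) ^ 2 ≤ (u ⬝ᵥ u) * (w ⬝ᵥ w) := by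
  simpa [dotProduct, sq] using Finset.sum_mul_sq_le_sq_mul_sq Finset.univ u w

end DotProduct

section Spectral

variable {ι : Type*} [Fintype ι] [DecidableEq ι]

open scoped MatrixOrder in
theorem Matrix.IsHermitian.forall_eigenvalues_le_iff {A : Matrix ι ι ℝ} (hA : A.IsHermitian)
    (c : ℝ) : (∀ i, hA.eigenvalues i ≤ c) ↔ ∀ x : ι → ℝ, x ⬝ᵥ (A *ᵥ x) ≤ c * (x ⬝ᵥ x) := by
  have h_le_iff : A ≤ algebraMap ℝ _ c ↔ ∀ i, hA.eigenvalues i ≤ c := by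
    rw [le_algebraMap_iff_spectrum_le hA.isSelfAdjoint, hA.spectrum_real_eq_range_eigenvalues]
    simp
  have h_herm : (algebraMap ℝ (Matrix ι ι ℝ) c - A).IsHermitian :=
    (isHermitian_diagonal_of_self_adjoint _ (IsSelfAdjoint.all _)).sub hA
  rw [← h_le_iff, Matrix.le_iff, posSemidef_iff_dotProduct_mulVec, and_iff_right h_herm]
  simp [sub_mulVec, Algebra.algebraMap_eq_smul_one, smul_mulVec, sub_nonneg]

theorem Matrix.IsHermitian.eigenvalues_le_lamMax {A : Matrix ι ι ℝ} (hA : A.IsHermitian) (i : ι) :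
    hA.eigenvalues i ≤ lamMax A hA :=
  le_ciSup (Set.finite_range _).bddAbove i

theorem sigMax_nonneg (A : Matrix ι ι ℝ) : 0 ≤ sigMax A := Real.sqrt_nonneg _

theorem sq_sigMax (A : Matrix ι ι ℝ) :
    sigMax A ^ 2 = lamMax (Aᴴ * A) (isHermitian_transpose_mul_self A) :=
  Real.sq_sqrt (Real.iSup_nonneg (eigenvalues_conjTranspose_mul_self_nonneg A))

theorem mulVec_dotProduct_self_le (A : Matrix ι ι ℝ) (v : ι → ℝ) :
    (A *ᵥ v) ⬝ᵥ (A *ᵥ v) ≤ sigMax A ^ 2 * (v ⬝ᵥ v) := by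
  have hA := isHermitian_transpose_mul_self A
  rw [sq_sigMax, ← dotProduct_transpose_mul_self_mulVec]
  exact (hA.forall_eigenvalues_le_iff _).1 hA.eigenvalues_le_lamMax v

theorem add_mulVec_dotProduct_self_le (A : Matrix ι ι ℝ) (u v : ι → ℝ) :
    (u + A *ᵥ v) ⬝ᵥ (u + A *ᵥ v) ≤
      (1 + sigMax A) * (u ⬝ᵥ u) + (sigMax A ^ 2 + sigMax A) * (v ⬝ᵥ v) := by
  set σ := sigMax A
  set w := A *ᵥ v
  have hw : w ⬝ᵥ w ≤ σ ^ 2 * (v ⬝ᵥ v) := mulVec_dotProduct_self_le A v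
  have hu := dotProduct_self_nonneg u
  have hv := dotProduct_self_nonneg v
  -- `(u ⬝ᵥ w)² ≤ σ² (u ⬝ᵥ u) (v ⬝ᵥ v)`, then AM-GM on the last two factors
  have h_cross : 2 * (u ⬝ᵥ w) ≤ σ * (u ⬝ᵥ u + v ⬝ᵥ v) := by
    refine le_of_abs_le (abs_le_of_sq_le_sq ?_ (mul_nonneg (sigMax_nonneg A) (add_nonneg hu hv)))
    nlinarith [sq_dotProduct_le u w, mul_le_mul_of_nonneg_left hw hu,
      mul_nonneg (sq_nonneg σ) (sq_nonneg (u ⬝ᵥ u - v ⬝ᵥ v))]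
  rw [add_dotProduct, dotProduct_add, dotProduct_add, dotProduct_comm w u]
  nlinarith

end Spectral

theorem Finset.sum_range_le_sum_range_succ {M : Type*} [AddCommMonoid M] [PartialOrder M]
    [IsOrderedAddMonoid M] {f : ℕ → M} {N : ℕ} (h0 : f 0 = 0) (hN : 0 ≤ f N) :
    ∑ i ∈ range N, f i ≤ ∑ i ∈ range N, f (i + 1) := by
  have h := sum_range_succ' f N
  rw [sum_range_succ, h0, add_zero] at h
  exact h ▸ le_add_of_nonneg_right hN

section Blocks

variable {N : ℕ} {m α : Type*}

/-- Block `k` of `x`, with blocks numbered `1, …, N` as in the paper and `0` outside that range. -/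
def blockOf [Zero α] (x : Fin N × m → α) (k : ℕ) : m → α :=
  fun j => if h : 0 < k ∧ k ≤ N then x (⟨k - 1, by omega⟩, j) else 0

@[simp]
theorem blockOf_zero [Zero α] (x : Fin N × m → α) : blockOf x 0 = 0 := by
  ext j; simp [blockOf]

@[simp]
theorem blockOf_succ [Zero α] (x : Fin N × m → α) (i : Fin N) :
    blockOf x (i + 1) = fun j => x (i, j) := by
  ext j; simp [blockOf]

theorem dotProduct_eq_sum_blockOf [Fintype m] [CommSemiring α] (x y : Fin N × m → α) :
    x ⬝ᵥ y = ∑ i : Fin N, blockOf x (i + 1) ⬝ᵥ blockOf y (i + 1) := by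
  simp [dotProduct, Fintype.sum_prod_type]

end Blocks

theorem Fin.sum_ite_val_add_one_eq {M : Type*} [AddCommMonoid M] {N : ℕ} {F : ℕ → M}
    (hF : F 0 = 0) {i : ℕ} (hi : i ≤ N) :
    ∑ i' : Fin N, (if (i' : ℕ) + 1 = i then F (i' + 1) else 0) = F i := by
  have h := Finset.sum_range_succ' (fun k => if k = i then F k else 0) N
  simp only [Finset.sum_ite_eq', Finset.mem_range, Nat.lt_succ_of_le hi, if_true] at h
  rw [Fin.sum_univ_eq_sum_range (fun k => if k + 1 = i then F (k + 1) else 0), h]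
  simp [hF]

theorem lowerBidiag_eq_one_add {N n : ℕ} (g : ℕ → Matrix (Fin n) (Fin n) ℝ) :
    lowerBidiag N n g =
      1 + of fun p r => if (r.1 : ℕ) + 1 = p.1 then g (p.1 + 1) p.2 r.2 else 0 := by
  ext p r
  by_cases h : p.1 = r.1 <;> simp [lowerBidiag, one_apply, Prod.ext_iff, h]

theorem lowerBidiag_mulVec_apply {N n : ℕ} (g : ℕ → Matrix (Fin n) (Fin n) ℝ)
    (x : Fin N × Fin n → ℝ) (i : Fin N) (j : Fin n) :
    (lowerBidiag N n g *ᵥ x) (i, j) = x (i, j) + (g (i + 1) *ᵥ blockOf x i) j := by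
  rw [lowerBidiag_eq_one_add, add_mulVec, one_mulVec, Pi.add_apply,
    ← Fin.sum_ite_val_add_one_eq (F := fun k => (g (i + 1) *ᵥ blockOf x k) j) (by simp) i.is_lt.le]
  simp [mulVec, dotProduct, Fintype.sum_prod_type, ite_mul, Finset.sum_ite_irrel]

theorem blockOf_lowerBidiag_mulVec {N n : ℕ} (g : ℕ → Matrix (Fin n) (Fin n) ℝ)
    (x : Fin N × Fin n → ℝ) (i : Fin N) :
    blockOf (lowerBidiag N n g *ᵥ x) (i + 1) = blockOf x (i + 1) + g (i + 1) *ᵥ blockOf x i := by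
  ext j; simp [lowerBidiag_mulVec_apply]

theorem lowerBidiag_mulVec_dotProduct_self_le {N n : ℕ} (g : ℕ → Matrix (Fin n) (Fin n) ℝ)
    (x : Fin N × Fin n → ℝ) :
    (lowerBidiag N n g *ᵥ x) ⬝ᵥ (lowerBidiag N n g *ᵥ x) ≤
      ∑ i : Fin N, (1 + sigMax (g (i + 2)) ^ 2 + sigMax (g (i + 1)) + sigMax (g (i + 2))) *
        (blockOf x (i + 1) ⬝ᵥ blockOf x (i + 1)) := by
  set Y := blockOf x
  set c : ℕ → ℝ := fun k => sigMax (g k) ^ 2 + sigMax (g k)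
  have h_shift : ∑ i : Fin N, c (i + 1) * (Y i ⬝ᵥ Y i) ≤
      ∑ i : Fin N, c (i + 2) * (Y (i + 1) ⬝ᵥ Y (i + 1)) := by
    rw [Fin.sum_univ_eq_sum_range (fun i => c (i + 1) * (Y i ⬝ᵥ Y i)),
      Fin.sum_univ_eq_sum_range (fun i => c (i + 2) * (Y (i + 1) ⬝ᵥ Y (i + 1)))]
    refine Finset.sum_range_le_sum_range_succ (by simp [Y]) ?_
    exact mul_nonneg (add_nonneg (sq_nonneg _) (sigMax_nonneg _)) (dotProduct_self_nonneg _)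
  calc (lowerBidiag N n g *ᵥ x) ⬝ᵥ (lowerBidiag N n g *ᵥ x)
      = ∑ i : Fin N, (Y (i + 1) + g (i + 1) *ᵥ Y i) ⬝ᵥ (Y (i + 1) + g (i + 1) *ᵥ Y i) := by
        simp only [dotProduct_eq_sum_blockOf (lowerBidiag N n g *ᵥ x),
          blockOf_lowerBidiag_mulVec, Y]
    _ ≤ ∑ i : Fin N, ((1 + sigMax (g (i + 1))) * (Y (i + 1) ⬝ᵥ Y (i + 1)) +
          c (i + 1) * (Y i ⬝ᵥ Y i)) :=
        Finset.sum_le_sum fun i _ => add_mulVec_dotProduct_self_le _ _ _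
    _ ≤ ∑ i : Fin N, ((1 + sigMax (g (i + 1))) * (Y (i + 1) ⬝ᵥ Y (i + 1)) +
          c (i + 2) * (Y (i + 1) ⬝ᵥ Y (i + 1))) := by
        simp only [Finset.sum_add_distrib]
        gcongr
    _ = _ := Finset.sum_congr rfl fun i _ => by ring

theorem stmt1_general (N n : ℕ)
    (g : ℕ → Matrix (Fin n) (Fin n) ℝ)
    (G : Matrix (Fin N × Fin n) (Fin N × Fin n) ℝ) (hGdef : G = lowerBidiag N n g)
    (hne : (Finset.Icc 1 N).Nonempty) :
    ∀ i, (isHermitian_transpose_mul_self G).eigenvalues i ≤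
      (Finset.Icc 1 N).sup' hne
        (fun k => 1 + sigMax (g (k + 1)) ^ 2 + sigMax (g k) + sigMax (g (k + 1))) := by
  set F : ℕ → ℝ := fun k => 1 + sigMax (g (k + 1)) ^ 2 + sigMax (g k) + sigMax (g (k + 1))
  refine ((isHermitian_transpose_mul_self G).forall_eigenvalues_le_iff _).2 fun x => ?_
  subst hGdef
  calc x ⬝ᵥ (((lowerBidiag N n g)ᵀ * lowerBidiag N n g) *ᵥ x)
      = (lowerBidiag N n g *ᵥ x) ⬝ᵥ (lowerBidiag N n g *ᵥ x) :=
        dotProduct_transpose_mul_self_mulVec _ x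
    _ ≤ ∑ i : Fin N, F (i + 1) * (blockOf x (i + 1) ⬝ᵥ blockOf x (i + 1)) :=
        lowerBidiag_mulVec_dotProduct_self_le g x
    _ ≤ ∑ i : Fin N, (Finset.Icc 1 N).sup' hne F * (blockOf x (i + 1) ⬝ᵥ blockOf x (i + 1)) := by
        gcongr with i
        · exact dotProduct_self_nonneg _
        · exact Finset.le_sup' F (Finset.mem_Icc.2 ⟨by omega, i.is_lt⟩)
    _ = (Finset.Icc 1 N).sup' hne F * (x ⬝ᵥ x) := by
        rw [← Finset.mul_sum, dotProduct_eq_sum_blockOf]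

/-- Every eigenvalue `λ` of `gᵀg` satisfies
`λ ≤ max_{1 ≤ k ≤ N} { 1 + σ_max(g_{k+1})² + σ_max(g_k) + σ_max(g_{k+1}) }`,
with the conventions `g_1 = 0` and `g_{N+1} = 0`. -/
theorem stmt1 (N n : ℕ) [NeZero N] [NeZero n]
    (g : ℕ → Matrix (Fin n) (Fin n) ℝ)
    (hg1 : g 1 = 0) (hgN1 : g (N + 1) = 0)
    (G : Matrix (Fin N × Fin n) (Fin N × Fin n) ℝ) (hGdef : G = lowerBidiag N n g)
    (hne : (Finset.Icc 1 N).Nonempty) :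
    ∀ i, (isHermitian_transpose_mul_self G).eigenvalues i ≤
      (Finset.Icc 1 N).sup' hne
        (fun k => 1 + sigMax (g (k + 1)) ^ 2 + sigMax (g k) + sigMax (g (k + 1))) :=
  stmt1_general N n g G hGdef hne
end

section
/- Let A be a symmetric positive definite block tridiagonal matrix with diagonal blocks b_1,...,b_N and subdiagonal blocks c_2,...,c_N, and suppose 0 < α_L ≤ λ_min(A) and λ_max(A) ≤ α_U. Define the forward recursion d_1 = b_1 and d_k = b_k − c_k d_{k−1}⁻¹ c_kᵀ for k = 2,...,N. Then every d_k is symmetric positive definite with α_L ≤ λ_min(d_k) ≤ λ_max(d_k) ≤ α_U. -/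
open Matrix

/-- Symmetric block tridiagonal matrix with `N` diagonal blocks `b 0, …, b (N-1)` of size
`n`, subdiagonal blocks `c i` in (0-based) position `(i, i-1)` for `i = 1,…,N-1`, and the
transposes `(c (i+1))ᵀ` in position `(i, i+1)`. -/
def blockTri (N n : ℕ) (b c : ℕ → Matrix (Fin n) (Fin n) ℝ) :
    Matrix (Fin N × Fin n) (Fin N × Fin n) ℝ :=
  fun p r =>
    if p.1 = r.1 then b (p.1 : ℕ) p.2 r.2
    else if (r.1 : ℕ) + 1 = (p.1 : ℕ) then c (p.1 : ℕ) p.2 r.2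
    else if (p.1 : ℕ) + 1 = (r.1 : ℕ) then c (r.1 : ℕ) r.2 p.2
    else 0

/-- Forward (Thomas) block elimination: `d 0 = b 0`,
`d (k+1) = b (k+1) − c (k+1) (d k)⁻¹ (c (k+1))ᵀ`. -/
noncomputable def fwdD {n : ℕ} (b c : ℕ → Matrix (Fin n) (Fin n) ℝ) :
    ℕ → Matrix (Fin n) (Fin n) ℝ
  | 0 => b 0
  | k + 1 => b (k + 1) - c (k + 1) * (fwdD b c k)⁻¹ * (c (k + 1))ᵀ

/-- Auxiliary backward elimination sequence: `bwdAux N b c j` is the backward Schur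
complement at block index `N - 1 - j`. -/
noncomputable def bwdAux {n : ℕ} (N : ℕ) (b c : ℕ → Matrix (Fin n) (Fin n) ℝ) :
    ℕ → Matrix (Fin n) (Fin n) ℝ
  | 0 => b (N - 1)
  | j + 1 => b (N - 1 - (j + 1)) - (c (N - 1 - j))ᵀ * (bwdAux N b c j)⁻¹ * c (N - 1 - j)

/-- Backward block elimination: `bwdD N b c (N-1) = b (N-1)` and
`bwdD N b c k = b k − (c (k+1))ᵀ (bwdD N b c (k+1))⁻¹ (c (k+1))` for `k < N-1`. -/
noncomputable def bwdD {n : ℕ} (N : ℕ) (b c : ℕ → Matrix (Fin n) (Fin n) ℝ) (k : ℕ) :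
    Matrix (Fin n) (Fin n) ℝ :=
  bwdAux N b c (N - 1 - k)

/-- Forward elimination of the right-hand side: `s 0 = r 0`,
`s (k+1) = r (k+1) − c (k+1) (d k)⁻¹ s k`. -/
noncomputable def fwdS {n : ℕ} (b c : ℕ → Matrix (Fin n) (Fin n) ℝ)
    (r : ℕ → Fin n → ℝ) : ℕ → Fin n → ℝ
  | 0 => r 0
  | k + 1 => r (k + 1) - (c (k + 1) * (fwdD b c k)⁻¹) *ᵥ (fwdS b c r k)

/-- Auxiliary backward elimination of the right-hand side. -/
noncomputable def bwdSAux {n : ℕ} (N : ℕ) (b c : ℕ → Matrix (Fin n) (Fin n) ℝ)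
    (r : ℕ → Fin n → ℝ) : ℕ → Fin n → ℝ
  | 0 => r (N - 1)
  | j + 1 => r (N - 1 - (j + 1)) -
      ((c (N - 1 - j))ᵀ * (bwdAux N b c j)⁻¹) *ᵥ (bwdSAux N b c r j)

/-- Backward elimination of the right-hand side:
`bwdS N b c r k = r k − (c (k+1))ᵀ (bwdD N b c (k+1))⁻¹ (bwdS N b c r (k+1))`. -/
noncomputable def bwdS {n : ℕ} (N : ℕ) (b c : ℕ → Matrix (Fin n) (Fin n) ℝ)
    (r : ℕ → Fin n → ℝ) (k : ℕ) : Fin n → ℝ :=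
  bwdSAux N b c r (N - 1 - k)

/-!
For `y`, back substitution through the block rows `0, …, k` with block `k` equal to `y` gives a
block vector `z` with `zᵀ A z = yᵀ d_k y` (the Schur complement identity, one block at a time) and
`‖z‖ ≥ ‖y‖`; hence `αL ‖y‖² ≤ yᵀ d_k y`. Conversely `d_k = b_k - c_k d_{k-1}⁻¹ c_kᵀ ≤ b_k` because
`d_{k-1}` is positive definite, and `yᵀ b_k y` is the quadratic form of `A` at the block vector
supported on block `k`, so `yᵀ d_k y ≤ αU ‖y‖²`. These Rayleigh-quotient bounds are equivalent to
the eigenvalue bounds.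
-/

open scoped MatrixOrder

section Spectrum

variable {m : Type*} [Fintype m] {M : Matrix m m ℝ}

lemma Matrix.IsHermitian.dotProduct_mulVec_add (hM : M.IsHermitian) (u v : m → ℝ) :
    (u + v) ⬝ᵥ (M *ᵥ (u + v)) = u ⬝ᵥ (M *ᵥ u) + 2 * (v ⬝ᵥ (M *ᵥ u)) + v ⬝ᵥ (M *ᵥ v) := by
  have hcomm : u ⬝ᵥ (M *ᵥ v) = v ⬝ᵥ (M *ᵥ u) := by
    rw [← dotProduct_transpose_mulVec, (isHermitian_iff_isSymm.1 hM).eq]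
  rw [mulVec_add, dotProduct_add, add_dotProduct, add_dotProduct, hcomm]
  ring

variable [DecidableEq m]

lemma dotProduct_mulVec_sub_algebraMap (x : m → ℝ) (α : ℝ) :
    x ⬝ᵥ ((M - algebraMap ℝ _ α) *ᵥ x) = x ⬝ᵥ (M *ᵥ x) - α * (x ⬝ᵥ x) := by
  simp [sub_mulVec, Algebra.algebraMap_eq_smul_one, smul_mulVec, dotProduct_sub]

lemma Matrix.IsHermitian.le_eigenvalues_iff (hM : M.IsHermitian) (α : ℝ) :
    (∀ i, α ≤ hM.eigenvalues i) ↔ ∀ x, α * (x ⬝ᵥ x) ≤ x ⬝ᵥ (M *ᵥ x) := by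
  have hs : (M - algebraMap ℝ _ α).IsHermitian :=
    hM.isSelfAdjoint.sub (.algebraMap _ (.all α))
  rw [← Set.forall_mem_range, ← hM.spectrum_real_eq_range_eigenvalues,
    ← algebraMap_le_iff_le_spectrum hM.isSelfAdjoint, le_iff, posSemidef_iff_dotProduct_mulVec,
    and_iff_right hs]
  simp only [star_trivial, dotProduct_mulVec_sub_algebraMap, sub_nonneg]

lemma Matrix.IsHermitian.eigenvalues_le_iff (hM : M.IsHermitian) (α : ℝ) :
    (∀ i, hM.eigenvalues i ≤ α) ↔ ∀ x, x ⬝ᵥ (M *ᵥ x) ≤ α * (x ⬝ᵥ x) := by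
  have hs : (algebraMap ℝ _ α - M).IsHermitian :=
    (IsSelfAdjoint.algebraMap _ (.all α)).sub hM.isSelfAdjoint
  rw [← Set.forall_mem_range (p := (· ≤ α)), ← hM.spectrum_real_eq_range_eigenvalues,
    ← le_algebraMap_iff_spectrum_le hM.isSelfAdjoint, le_iff, posSemidef_iff_dotProduct_mulVec,
    and_iff_right hs]
  simp only [star_trivial, ← neg_sub M, neg_mulVec, dotProduct_neg,
    dotProduct_mulVec_sub_algebraMap, neg_nonneg, sub_nonpos]

lemma Matrix.IsHermitian.posDef_of_le_dotProduct_mulVec (hM : M.IsHermitian) {α : ℝ}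
    (hα : 0 < α) (h : ∀ x, α * (x ⬝ᵥ x) ≤ x ⬝ᵥ (M *ᵥ x)) : M.PosDef :=
  hM.posDef_iff_eigenvalues_pos.2 fun i => hα.trans_le ((hM.le_eigenvalues_iff α).2 h i)

end Spectrum

/-- The Schur complement identity for the quadratic form of `!![d, cᵀ; c, b]` at `(w, y)`. -/
lemma dotProduct_mulVec_schur {m : Type*} [Fintype m] [DecidableEq m] {d : Matrix m m ℝ}
    (hd : IsUnit d.det) (b c : Matrix m m ℝ) (y : m → ℝ) :
    let w := -(d⁻¹ *ᵥ (cᵀ *ᵥ y))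
    w ⬝ᵥ (d *ᵥ w) + 2 * (y ⬝ᵥ (c *ᵥ w)) + y ⬝ᵥ (b *ᵥ y) =
      y ⬝ᵥ ((b - c * d⁻¹ * cᵀ) *ᵥ y) := by
  intro w
  have hdw : d *ᵥ w = -(cᵀ *ᵥ y) := by
    rw [mulVec_neg, mulVec_mulVec, mul_nonsing_inv _ hd, one_mulVec]
  have hc (v : m → ℝ) : y ⬝ᵥ (c *ᵥ v) = v ⬝ᵥ (cᵀ *ᵥ y) := (dotProduct_transpose_mulVec c v y).symm
  rw [hdw, hc, sub_mulVec, dotProduct_sub, ← mulVec_mulVec, ← mulVec_mulVec, hc]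
  simp only [w, dotProduct_neg, neg_dotProduct]
  ring

lemma mulVec_apply_eq_sum_of_block {ι κ : Type*} [Fintype ι] [Fintype κ]
    (M : Matrix (ι × κ) (ι × κ) ℝ) (z : ι × κ → ℝ) (p : ι × κ) (L : ι)
    (h : ∀ q : ι × κ, q.1 ≠ L → M p q * z q = 0) :
    (M *ᵥ z) p = ∑ j, M p (L, j) * z (L, j) := by
  rw [mulVec, dotProduct, Fintype.sum_prod_type,
    Finset.sum_eq_single L (fun K _ hK => Finset.sum_eq_zero fun j _ => h (K, j) hK)
      (by simp)]

lemma sum_block_self_le_dotProduct {ι κ : Type*} [Fintype ι] [Fintype κ]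
    (z : ι × κ → ℝ) (K : ι) : ∑ i, z (K, i) * z (K, i) ≤ z ⬝ᵥ z := by
  rw [dotProduct, Fintype.sum_prod_type]
  exact Finset.single_le_sum (f := fun L => ∑ i, z (L, i) * z (L, i))
    (fun L _ => Finset.sum_nonneg fun i _ => mul_self_nonneg _) (Finset.mem_univ K)

def blockSingle {n : ℕ} (N k : ℕ) (y : Fin n → ℝ) : Fin N × Fin n → ℝ :=
  fun p => if (p.1 : ℕ) = k then y p.2 else 0

section BlockTri

variable {N n : ℕ} {b c : ℕ → Matrix (Fin n) (Fin n) ℝ}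

lemma blockSingle_dotProduct {k : ℕ} (hk : k < N) (y : Fin n → ℝ) (z : Fin N × Fin n → ℝ) :
    blockSingle N k y ⬝ᵥ z = ∑ i, y i * z (⟨k, hk⟩, i) := by
  rw [dotProduct, Fintype.sum_prod_type,
    Finset.sum_eq_single ⟨k, hk⟩ (fun K _ hK => ?_) (by simp)]
  · simp [blockSingle]
  · have : (K : ℕ) ≠ k := fun h => hK (Fin.ext h)
    simp [blockSingle, this]

lemma blockSingle_dotProduct_self {k : ℕ} (hk : k < N) (y : Fin n → ℝ) :
    blockSingle N k y ⬝ᵥ blockSingle N k y = y ⬝ᵥ y := by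
  rw [blockSingle_dotProduct hk]
  simp [blockSingle, dotProduct]

lemma blockSingle_dotProduct_blockTri_mulVec {k : ℕ} (hk : k < N) (y : Fin n → ℝ) :
    blockSingle N k y ⬝ᵥ (blockTri N n b c *ᵥ blockSingle N k y) = y ⬝ᵥ (b k *ᵥ y) := by
  rw [blockSingle_dotProduct hk]
  refine Finset.sum_congr rfl fun i _ => congrArg _ ?_
  rw [mulVec_apply_eq_sum_of_block _ _ _ ⟨k, hk⟩ fun q hq => ?_]
  · simp [blockTri, blockSingle, mulVec, dotProduct]
  · have : (q.1 : ℕ) ≠ k := fun h => hq (Fin.ext h)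
    simp [blockSingle, this]

lemma blockSingle_succ_dotProduct_blockTri_mulVec {k : ℕ} (hk : k + 1 < N) (y : Fin n → ℝ)
    (z : Fin N × Fin n → ℝ) (hz : ∀ p : Fin N × Fin n, k < p.1 → z p = 0) :
    blockSingle N (k + 1) y ⬝ᵥ (blockTri N n b c *ᵥ z) =
      y ⬝ᵥ (c (k + 1) *ᵥ fun j => z (⟨k, by omega⟩, j)) := by
  rw [blockSingle_dotProduct hk]
  refine Finset.sum_congr rfl fun i _ => congrArg _ ?_
  rw [mulVec_apply_eq_sum_of_block _ _ _ ⟨k, by omega⟩ fun q hq => ?_]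
  · simp [blockTri, mulVec, dotProduct]
  · have : (q.1 : ℕ) ≠ k := fun h => hq (Fin.ext h)
    rcases lt_or_gt_of_ne this with hlt | hgt
    · have h1 : k + 1 ≠ (q.1 : ℕ) := by omega
      have h2 : k + 1 + 1 ≠ (q.1 : ℕ) := by omega
      simp [blockTri, Fin.ext_iff, this, h1, h2]
    · simp [hz q hgt]

lemma isHermitian_of_isHermitian_blockTri (hA : (blockTri N n b c).IsHermitian) {k : ℕ}
    (hk : k < N) : (b k).IsHermitian := by
  ext i j
  simpa [blockTri] using congr_fun₂ hA (⟨k, hk⟩, i) (⟨k, hk⟩, j)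

lemma dotProduct_mulVec_le_of_blockTri {αU : ℝ}
    (hu : ∀ z, z ⬝ᵥ (blockTri N n b c *ᵥ z) ≤ αU * (z ⬝ᵥ z)) {k : ℕ} (hk : k < N)
    (y : Fin n → ℝ) : y ⬝ᵥ (b k *ᵥ y) ≤ αU * (y ⬝ᵥ y) := by
  simpa [blockSingle_dotProduct_blockTri_mulVec hk, blockSingle_dotProduct_self hk]
    using hu (blockSingle N k y)

end BlockTri

noncomputable def elimVec {n : ℕ} (N : ℕ) (b c : ℕ → Matrix (Fin n) (Fin n) ℝ) :
    ℕ → (Fin n → ℝ) → Fin N × Fin n → ℝ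
  | 0, y => blockSingle N 0 y
  | k + 1, y =>
      elimVec N b c k (-((fwdD b c k)⁻¹ *ᵥ ((c (k + 1))ᵀ *ᵥ y))) + blockSingle N (k + 1) y

section Elimination

variable {N n : ℕ} {b c : ℕ → Matrix (Fin n) (Fin n) ℝ}

lemma elimVec_apply_of_lt {k : ℕ} (y : Fin n → ℝ) {p : Fin N × Fin n} (hp : k < p.1) :
    elimVec N b c k y p = 0 := by
  induction k generalizing y with
  | zero => simp [elimVec, blockSingle, hp.ne']
  | succ k ih => simp [elimVec, ih _ (by omega), blockSingle, hp.ne']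

lemma elimVec_apply_self {k : ℕ} (y : Fin n → ℝ) {p : Fin N × Fin n} (hp : (p.1 : ℕ) = k) :
    elimVec N b c k y p = y p.2 := by
  cases k with
  | zero => simp [elimVec, blockSingle, hp]
  | succ k => simp [elimVec, elimVec_apply_of_lt _ (show k < p.1 by omega), blockSingle, hp]

lemma dotProduct_self_le_elimVec {k : ℕ} (hk : k < N) (y : Fin n → ℝ) :
    y ⬝ᵥ y ≤ elimVec N b c k y ⬝ᵥ elimVec N b c k y := by
  simpa [dotProduct, elimVec_apply_self] using
    sum_block_self_le_dotProduct (elimVec N b c k y) ⟨k, hk⟩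

lemma elimVec_dotProduct_blockTri_mulVec (hA : (blockTri N n b c).IsHermitian) {k : ℕ}
    (hk : k < N) (hd : ∀ j < k, IsUnit (fwdD b c j).det) (y : Fin n → ℝ) :
    elimVec N b c k y ⬝ᵥ (blockTri N n b c *ᵥ elimVec N b c k y) = y ⬝ᵥ (fwdD b c k *ᵥ y) := by
  induction k generalizing y with
  | zero => exact blockSingle_dotProduct_blockTri_mulVec hk y
  | succ k ih =>
    set w := -((fwdD b c k)⁻¹ *ᵥ ((c (k + 1))ᵀ *ᵥ y))
    have hw : (fun j => elimVec N b c k w (⟨k, by omega⟩, j)) = w :=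
      funext fun j => elimVec_apply_self w rfl
    rw [elimVec, hA.dotProduct_mulVec_add, ih (by omega) (fun j hj => hd j (by omega)),
      blockSingle_succ_dotProduct_blockTri_mulVec hk _ _ fun p hp => elimVec_apply_of_lt w hp,
      hw, blockSingle_dotProduct_blockTri_mulVec hk]
    exact dotProduct_mulVec_schur (hd k k.lt_succ_self) _ _ y

lemma fwdD_isHermitian (hA : (blockTri N n b c).IsHermitian) {k : ℕ} (hk : k < N) :
    (fwdD b c k).IsHermitian := by
  induction k with
  | zero => exact isHermitian_of_isHermitian_blockTri hA hk
  | succ k ih =>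
    have hcdc := isHermitian_mul_mul_conjTranspose (c (k + 1)) (ih (by omega)).inv
    rw [conjTranspose_eq_transpose_of_trivial] at hcdc
    exact (isHermitian_of_isHermitian_blockTri hA hk).sub hcdc

lemma le_dotProduct_fwdD_mulVec (hA : (blockTri N n b c).IsHermitian) {αL : ℝ} (hαL : 0 ≤ αL)
    (hl : ∀ z, αL * (z ⬝ᵥ z) ≤ z ⬝ᵥ (blockTri N n b c *ᵥ z)) {k : ℕ} (hk : k < N)
    (hd : ∀ j < k, IsUnit (fwdD b c j).det) (y : Fin n → ℝ) :
    αL * (y ⬝ᵥ y) ≤ y ⬝ᵥ (fwdD b c k *ᵥ y) :=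
  calc αL * (y ⬝ᵥ y)
      ≤ αL * (elimVec N b c k y ⬝ᵥ elimVec N b c k y) :=
        mul_le_mul_of_nonneg_left (dotProduct_self_le_elimVec hk y) hαL
    _ ≤ elimVec N b c k y ⬝ᵥ (blockTri N n b c *ᵥ elimVec N b c k y) := hl _
    _ = y ⬝ᵥ (fwdD b c k *ᵥ y) := elimVec_dotProduct_blockTri_mulVec hA hk hd y

lemma dotProduct_fwdD_succ_mulVec_le (k : ℕ) (hd : (fwdD b c k).PosSemidef) (y : Fin n → ℝ) :
    y ⬝ᵥ (fwdD b c (k + 1) *ᵥ y) ≤ y ⬝ᵥ (b (k + 1) *ᵥ y) := by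
  have hcdc := hd.inv.mul_mul_conjTranspose_same (c (k + 1))
  rw [conjTranspose_eq_transpose_of_trivial] at hcdc
  have hnonneg := hcdc.dotProduct_mulVec_nonneg y
  rw [star_trivial] at hnonneg
  rw [fwdD, sub_mulVec, dotProduct_sub]
  linarith

lemma dotProduct_fwdD_mulVec_le {αU : ℝ}
    (hu : ∀ z, z ⬝ᵥ (blockTri N n b c *ᵥ z) ≤ αU * (z ⬝ᵥ z)) {k : ℕ} (hk : k < N)
    (hd : ∀ j < k, (fwdD b c j).PosSemidef) (y : Fin n → ℝ) :
    y ⬝ᵥ (fwdD b c k *ᵥ y) ≤ αU * (y ⬝ᵥ y) := by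
  cases k with
  | zero => exact dotProduct_mulVec_le_of_blockTri hu hk y
  | succ k =>
    exact (dotProduct_fwdD_succ_mulVec_le k (hd k k.lt_succ_self) y).trans
      (dotProduct_mulVec_le_of_blockTri hu hk y)

lemma fwdD_posDef (hA : (blockTri N n b c).IsHermitian) {αL : ℝ} (hαL : 0 < αL)
    (hl : ∀ z, αL * (z ⬝ᵥ z) ≤ z ⬝ᵥ (blockTri N n b c *ᵥ z)) {k : ℕ} (hk : k < N) :
    (fwdD b c k).PosDef := by
  induction k using Nat.strong_induction_on with
  | _ k ih =>
    refine (fwdD_isHermitian hA hk).posDef_of_le_dotProduct_mulVec hαL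
      (le_dotProduct_fwdD_mulVec hA hαL.le hl hk fun j hj => ?_)
    exact (isUnit_iff_isUnit_det _).1 (ih j hj (by omega)).isUnit

end Elimination

theorem stmt4_general (N n : ℕ)
    (b c : ℕ → Matrix (Fin n) (Fin n) ℝ)
    (A : Matrix (Fin N × Fin n) (Fin N × Fin n) ℝ) (hAdef : A = blockTri N n b c)
    (hA : A.PosDef)
    (αL αU : ℝ) (hαL : 0 < αL)
    (hbd : ∀ i, αL ≤ hA.1.eigenvalues i ∧ hA.1.eigenvalues i ≤ αU) :
    ∀ k < N, ∃ h : (fwdD b c k).PosDef,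
      ∀ i, αL ≤ h.1.eigenvalues i ∧ h.1.eigenvalues i ≤ αU := by
  subst hAdef
  have hl := (hA.1.le_eigenvalues_iff αL).1 fun i => (hbd i).1
  have hu := (hA.1.eigenvalues_le_iff αU).1 fun i => (hbd i).2
  have hpd : ∀ k < N, (fwdD b c k).PosDef := fun k hk => fwdD_posDef hA.1 hαL hl hk
  intro k hk
  refine ⟨hpd k hk, fun i => ⟨?_, ?_⟩⟩
  · exact ((hpd k hk).1.le_eigenvalues_iff αL).2 (le_dotProduct_fwdD_mulVec hA.1 hαL.le hl hk
      fun j hj => (isUnit_iff_isUnit_det _).1 (hpd j (by omega)).isUnit) i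
  · exact ((hpd k hk).1.eigenvalues_le_iff αU).2
      (dotProduct_fwdD_mulVec_le hu hk (fun j hj => (hpd j (by omega)).posSemidef)) i

/-- If the symmetric positive definite block tridiagonal matrix `A` has all
eigenvalues in `[αL, αU]` with `0 < αL`, then every forward Schur complement `d_k` produced
by the Thomas recursion is symmetric positive definite with all eigenvalues in `[αL, αU]`. -/
theorem stmt4 (N n : ℕ) [NeZero N] [NeZero n]
    (b c : ℕ → Matrix (Fin n) (Fin n) ℝ)
    (A : Matrix (Fin N × Fin n) (Fin N × Fin n) ℝ) (hAdef : A = blockTri N n b c)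
    (hA : A.PosDef)
    (αL αU : ℝ) (hαL : 0 < αL)
    (hbd : ∀ i, αL ≤ hA.1.eigenvalues i ∧ hA.1.eigenvalues i ≤ αU) :
    ∀ k < N, ∃ h : (fwdD b c k).PosDef,
      ∀ i, αL ≤ h.1.eigenvalues i ∧ h.1.eigenvalues i ≤ αU :=
  stmt4_general N n b c A hAdef hA αL αU hαL hbd
end

section
/- Suppose b_k = q_k⁻¹ + u_k + g_{k+1}ᵀ q_{k+1}⁻¹ g_{k+1} and c_k = −q_k⁻¹ g_k, where each q_k is symmetric positive definite, each u_k is symmetric positive semidefinite, and g_{N+1} = 0. Define the backward recursion d_N = b_N, d_k = b_k − c_{k+1}ᵀ d_{k+1}⁻¹ c_{k+1}. Then d_k − q_k⁻¹ is positive semidefinite for every k. -/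
/-!
Backward induction on `k` shows `d_k ≥ q_k⁻¹` in the Loewner order. At `k = N` this is
`d_N - q_N⁻¹ = u_N`, because `g_{N+1} = 0`. For `k < N`, with `A = q_{k+1}⁻¹`, the recursion gives
`d_k - q_k⁻¹ = u_k + g_{k+1}ᵀ (A - A d_{k+1}⁻¹ A) g_{k+1}`, and `A - A D⁻¹ A ≥ 0` whenever
`D ≥ A > 0`: with `E = D - A ≥ 0` it equals `(E D⁻¹ A)ᴴ A⁻¹ (E D⁻¹ A) + (D⁻¹ A)ᴴ E (D⁻¹ A)`.
-/

open Matrix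

open scoped ComplexOrder

namespace Matrix

variable {m 𝕜 : Type*} [Fintype m] [DecidableEq m] [RCLike 𝕜]

theorem PosDef.posSemidef_sub_mul_inv_mul {A D : Matrix m m 𝕜} (hA : A.PosDef)
    (hDA : (D - A).PosSemidef) : (A - A * D⁻¹ * A).PosSemidef := by
  have hD : D.PosDef := by simpa using hA.add_posSemidef hDA
  have hAA : A⁻¹ * A = 1 := nonsing_inv_mul A (isUnit_iff_isUnit_det A |>.mp hA.isUnit)
  have hDD : D * D⁻¹ = 1 := mul_nonsing_inv D (isUnit_iff_isUnit_det D |>.mp hD.isUnit)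
  have hDD' : D⁻¹ * D = 1 := nonsing_inv_mul D (isUnit_iff_isUnit_det D |>.mp hD.isUnit)
  set E := D - A with hE
  have key : A - A * D⁻¹ * A =
      (E * D⁻¹ * A)ᴴ * A⁻¹ * (E * D⁻¹ * A) + (D⁻¹ * A)ᴴ * E * (D⁻¹ * A) :=
    calc A - A * D⁻¹ * A = A * (D⁻¹ * D) - A * D⁻¹ * A := by rw [hDD', mul_one]
      _ = A * D⁻¹ * E * (A⁻¹ * A) := by rw [hAA, hE]; noncomm_ring
      _ = A * D⁻¹ * E * A⁻¹ * (D * D⁻¹) * A := by rw [hDD]; noncomm_ring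
      _ = A * D⁻¹ * E * A⁻¹ * E * D⁻¹ * A + A * D⁻¹ * E * (A⁻¹ * A) * D⁻¹ * A := by
          rw [hE]; noncomm_ring
      _ = _ := by
          simp only [conjTranspose_mul, hA.isHermitian.eq, hDA.isHermitian.eq,
            hD.inv.isHermitian.eq, hAA, mul_one, mul_assoc]
  rw [key]
  exact (hA.inv.posSemidef.conjTranspose_mul_mul_same _).add (hDA.conjTranspose_mul_mul_same _)

theorem PosDef.posSemidef_kalman_step {Q U G D : Matrix m m 𝕜} (hQ : Q.PosDef)
    (hU : U.PosSemidef) (hD : (D - Q⁻¹).PosSemidef) :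
    (U + Gᴴ * Q⁻¹ * G - (-(Q⁻¹ * G))ᴴ * D⁻¹ * -(Q⁻¹ * G)).PosSemidef := by
  have h : U + Gᴴ * Q⁻¹ * G - (-(Q⁻¹ * G))ᴴ * D⁻¹ * -(Q⁻¹ * G) =
      U + Gᴴ * (Q⁻¹ - Q⁻¹ * D⁻¹ * Q⁻¹) * G := by
    simp only [conjTranspose_neg, conjTranspose_mul, hQ.inv.isHermitian.eq, neg_mul, mul_neg,
      neg_neg, mul_sub, sub_mul, mul_assoc]
    abel
  rw [h]
  exact hU.add ((hQ.inv.posSemidef_sub_mul_inv_mul hD).conjTranspose_mul_mul_same G)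

end Matrix

section BackwardElimination

variable {n : ℕ} (N : ℕ) (b c : ℕ → Matrix (Fin n) (Fin n) ℝ)

theorem bwdD_sub_one : bwdD N b c (N - 1) = b (N - 1) := by
  simp [bwdD, bwdAux]

theorem bwdD_of_lt {k : ℕ} (hk : k + 1 < N) :
    bwdD N b c k = b k - (c (k + 1))ᵀ * (bwdD N b c (k + 1))⁻¹ * c (k + 1) := by
  obtain ⟨j, hj⟩ : ∃ j, N - 1 - k = j + 1 := ⟨N - 1 - (k + 1), by omega⟩
  simp only [bwdD, hj, bwdAux]
  rw [show N - 1 - (j + 1) = k by omega, show N - 1 - j = k + 1 by omega,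
    show N - 1 - (k + 1) = j by omega]

end BackwardElimination

/-- `bwdD N (fun i => B (i + 1)) (fun i => C (i + 1)) (k - 1)` is the paper's `d_k`: the
blocks are indexed from `0` in `bwdD` and from `1` in `q, u, g, B, C`. -/
theorem stmt7_general (N n : ℕ)
    (q u g : ℕ → Matrix (Fin n) (Fin n) ℝ)
    (hq : ∀ k, (q k).PosDef) (hu : ∀ k, (u k).PosSemidef)
    (hgN1 : g (N + 1) = 0)
    (B C : ℕ → Matrix (Fin n) (Fin n) ℝ)
    (hB : ∀ k, B k = (q k)⁻¹ + u k + (g (k + 1))ᵀ * (q (k + 1))⁻¹ * g (k + 1))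
    (hC : ∀ k, C k = -((q k)⁻¹ * g k)) :
    ∀ k, 1 ≤ k → k ≤ N →
      (bwdD N (fun i => B (i + 1)) (fun i => C (i + 1)) (k - 1) - (q k)⁻¹).PosSemidef := by
  intro k hk1 hkN
  suffices h : ∀ i ≤ N - 1,
      (bwdD N (fun i => B (i + 1)) (fun i => C (i + 1)) i - (q (i + 1))⁻¹).PosSemidef by
    simpa [Nat.sub_add_cancel hk1] using h (k - 1) (by omega)
  intro i hi
  induction hi using Nat.decreasingInduction with
  | self =>
    rw [bwdD_sub_one, Nat.sub_add_cancel (by omega : 1 ≤ N), hB, hgN1]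
    simpa using hu N
  | of_succ i hi ih =>
    rw [bwdD_of_lt N _ _ (by omega), hB, hC]
    have key := (hq (i + 2)).posSemidef_kalman_step (G := g (i + 2)) (hu (i + 1)) ih
    simp only [conjTranspose_eq_transpose_of_trivial] at key
    rwa [add_assoc, add_sub_assoc, add_sub_cancel_left]

/-- For the Kalman block tridiagonal system with (1-based) blocks
`b_k = q_k⁻¹ + u_k + g_{k+1}ᵀ q_{k+1}⁻¹ g_{k+1}` and `c_k = −q_k⁻¹ g_k` (`q_k` symmetric
positive definite, `u_k` symmetric positive semidefinite, `g_{N+1} = 0`), the backward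
Schur complements `d_N = b_N`, `d_k = b_k − c_{k+1}ᵀ d_{k+1}⁻¹ c_{k+1}` satisfy:
`d_k − q_k⁻¹` is positive semidefinite for every `k = 1,…,N`.
(Here `bwdD N (fun i => B (i+1)) (fun i => C (i+1)) (k-1)` is the 0-based form of `d_k`.) -/
theorem stmt7 (N n : ℕ) (hN : 0 < N)
    (q u g : ℕ → Matrix (Fin n) (Fin n) ℝ)
    (hq : ∀ k, (q k).PosDef) (hu : ∀ k, (u k).PosSemidef)
    (hgN1 : g (N + 1) = 0)
    (B C : ℕ → Matrix (Fin n) (Fin n) ℝ)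
    (hB : ∀ k, B k = (q k)⁻¹ + u k + (g (k + 1))ᵀ * (q (k + 1))⁻¹ * g (k + 1))
    (hC : ∀ k, C k = -((q k)⁻¹ * g k)) :
    ∀ k, 1 ≤ k → k ≤ N →
      (bwdD N (fun i => B (i + 1)) (fun i => C (i + 1)) (k - 1) - (q k)⁻¹).PosSemidef :=
  stmt7_general N n q u g hq hu hgN1 B C hB hC
end

section
/- Let A be a symmetric positive definite block tridiagonal matrix with diagonal blocks b_k and subdiagonal blocks c_k, right-hand side r with blocks r_k, and let d_k^f, s_k^f and d_k^b, s_k^b be the forward and backward elimination sequences (d_1^f = b_1, s_1^f = r_1, d_k^f = b_k − c_k (d_{k−1}^f)⁻¹ c_kᵀ, s_k^f = r_k − c_k (d_{k−1}^f)⁻¹ s_{k−1}^f; d_N^b = b_N, s_N^b = r_N, d_k^b = b_k − c_{k+1}ᵀ (d_{k+1}^b)⁻¹ c_{k+1}, s_k^b = r_k − c_{k+1}ᵀ (d_{k+1}^b)⁻¹ s_{k+1}^b). Then for every k, the k-th block e_k of the solution of A e = r satisfies e_k = (d_k^f + d_k^b − b_k)⁻¹ (s_k^f + s_k^b − r_k).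 -/
open Matrix

/-!
Block Gaussian elimination from the top turns row `k` of `A x = r` into
`d_k^f x_k + c_{k+1}ᵀ x_{k+1} = s_k^f`, and elimination from the bottom (which is elimination
from the top for the reversed block order) into `d_k^b x_k + c_k x_{k-1} = s_k^b`. Adding the two
and subtracting the original row `k` leaves `(d_k^f + d_k^b - b_k) x_k = s_k^f + s_k^b - r_k`.

Positive definiteness makes every pivot invertible: for the vector `x` with `x_m = v` obtained
by back substitution through the first `m` forward-eliminated rows, `xᵀ A x = vᵀ d_m^f v`.
Finally, `d_k^f + d_k^b - b_k` is onto, since this identity for the right-hand side that is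
`w` in block `k` and zero elsewhere gives `(d_k^f + d_k^b - b_k) x_k = w`.
-/

namespace BlockTridiagonal

open Finset

variable {n : ℕ}

def subdiagMulVec (c : ℕ → Matrix (Fin n) (Fin n) ℝ) (x : ℕ → Fin n → ℝ) :
    ℕ → Fin n → ℝ
  | 0 => 0
  | k + 1 => c (k + 1) *ᵥ x k

def triMulVec (b c : ℕ → Matrix (Fin n) (Fin n) ℝ) (x : ℕ → Fin n → ℝ) (k : ℕ) :
    Fin n → ℝ :=
  subdiagMulVec c x k + b k *ᵥ x k + (c (k + 1))ᵀ *ᵥ x (k + 1)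

section Forward

variable (b c : ℕ → Matrix (Fin n) (Fin n) ℝ)

theorem fwdS_congr {ρ ρ' : ℕ → Fin n → ℝ} {m : ℕ} (h : ∀ j ≤ m, ρ j = ρ' j) :
    fwdS b c ρ m = fwdS b c ρ' m := by
  induction m with
  | zero => exact h 0 le_rfl
  | succ m ih =>
    simp only [fwdS, h (m + 1) le_rfl, ih fun j hj => h j (by omega)]

theorem fwdS_eq_zero {ρ : ℕ → Fin n → ℝ} {m : ℕ} (h : ∀ j ≤ m, ρ j = 0) :
    fwdS b c ρ m = 0 := by
  induction m with
  | zero => exact h 0 le_rfl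
  | succ m ih => simp [fwdS, h (m + 1) le_rfl, ih fun j hj => h j (by omega)]

theorem fwdS_eq_self {ρ : ℕ → Fin n → ℝ} {m : ℕ} (h : ∀ j < m, fwdS b c ρ j = 0) :
    fwdS b c ρ m = ρ m := by
  cases m with
  | zero => rfl
  | succ m => simp [fwdS, h m m.lt_succ_self]

theorem fwdS_single (k : ℕ) (w : Fin n → ℝ) : fwdS b c (Pi.single k w) k = w := by
  rw [fwdS_eq_self]
  · simp
  · exact fun j hj => fwdS_eq_zero b c fun i hi =>
      Pi.single_eq_of_ne (M := fun _ => Fin n → ℝ) (by omega : i ≠ k) w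

theorem fwdD_mulVec_add_eq_fwdS (x : ℕ → Fin n → ℝ) {m : ℕ}
    (hinv : ∀ j < m, IsUnit (fwdD b c j).det) :
    fwdD b c m *ᵥ x m + (c (m + 1))ᵀ *ᵥ x (m + 1) = fwdS b c (triMulVec b c x) m := by
  induction m with
  | zero => simp [fwdD, fwdS, triMulVec, subdiagMulVec]
  | succ m ih =>
    have hcancel :
        (c (m + 1) * (fwdD b c m)⁻¹) *ᵥ (fwdD b c m *ᵥ x m) = c (m + 1) *ᵥ x m := by
      rw [mulVec_mulVec, Matrix.mul_assoc, nonsing_inv_mul _ (hinv m m.lt_succ_self), mul_one]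
    rw [fwdS, ← ih fun j hj => hinv j (by omega), mulVec_add, hcancel]
    simp only [fwdD, triMulVec, subdiagMulVec, sub_mulVec, ← mulVec_mulVec, Matrix.mul_assoc]
    abel

end Forward

section BackSubst

variable (b c : ℕ → Matrix (Fin n) (Fin n) ℝ)

noncomputable def backSubst : ℕ → (Fin n → ℝ) → ℕ → Fin n → ℝ
  | 0, v => Pi.single 0 v
  | m + 1, v =>
    Function.update (backSubst m (-((fwdD b c m)⁻¹ *ᵥ (c (m + 1))ᵀ *ᵥ v))) (m + 1) v

theorem backSubst_self (m : ℕ) (v : Fin n → ℝ) : backSubst b c m v m = v := by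
  cases m <;> simp [backSubst]

theorem backSubst_of_lt {m j : ℕ} (v : Fin n → ℝ) (h : m < j) : backSubst b c m v j = 0 := by
  induction m generalizing v with
  | zero => simp [backSubst, Pi.single_eq_of_ne (M := fun _ => Fin n → ℝ) h.ne']
  | succ m ih => simp [backSubst, h.ne', ih _ (Nat.lt_of_succ_lt h)]

theorem fwdD_mulVec_backSubst_add {m : ℕ} (v : Fin n → ℝ)
    (hinv : ∀ j < m, IsUnit (fwdD b c j).det) {j : ℕ} (hj : j < m) :
    fwdD b c j *ᵥ backSubst b c m v j + (c (j + 1))ᵀ *ᵥ backSubst b c m v (j + 1) = 0 := by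
  induction m generalizing v with
  | zero => omega
  | succ m ih =>
    rcases (Nat.lt_succ_iff_lt_or_eq.mp hj) with hj | rfl
    · simp only [backSubst, Function.update_of_ne (by omega : j ≠ m + 1),
        Function.update_of_ne (by omega : j + 1 ≠ m + 1)]
      exact ih _ (fun i hi => hinv i (by omega)) hj
    · simp only [backSubst, Function.update_self, Function.update_of_ne (by omega : j ≠ j + 1),
        backSubst_self]
      rw [mulVec_neg, mulVec_mulVec, mul_nonsing_inv _ (hinv j hj), one_mulVec, neg_add_cancel]

theorem triMulVec_backSubst {m : ℕ} (v : Fin n → ℝ)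
    (hinv : ∀ j < m, IsUnit (fwdD b c j).det) {j : ℕ} (hj : j ≤ m) :
    triMulVec b c (backSubst b c m v) j = if j = m then fwdD b c m *ᵥ v else 0 := by
  have hfwd : ∀ i < m, fwdS b c (triMulVec b c (backSubst b c m v)) i = 0 := fun i hi => by
    rw [← fwdD_mulVec_add_eq_fwdS b c _ fun k hk => hinv k (by omega),
      fwdD_mulVec_backSubst_add b c v hinv hi]
  rw [← fwdS_eq_self b c fun i hi => hfwd i (by omega)]
  split_ifs with h
  · subst h
    rw [← fwdD_mulVec_add_eq_fwdS b c _ hinv, backSubst_self,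
      backSubst_of_lt b c v j.lt_succ_self, mulVec_zero, add_zero]
  · exact hfwd j (by omega)

end BackSubst

section Reversal

variable (N : ℕ) (b c : ℕ → Matrix (Fin n) (Fin n) ℝ)

def revB : ℕ → Matrix (Fin n) (Fin n) ℝ := fun j => b (N - 1 - j)

def revC : ℕ → Matrix (Fin n) (Fin n) ℝ := fun j => (c (N - j))ᵀ

theorem bwdAux_eq_fwdD_revB_revC (j : ℕ) :
    bwdAux N b c j = fwdD (revB N b) (revC N c) j := by
  induction j with
  | zero => rfl
  | succ j ih =>
    rw [bwdAux, fwdD, ih, revB, revC, transpose_transpose, show N - (j + 1) = N - 1 - j by omega]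

theorem bwdD_eq_fwdD_revB_revC (k : ℕ) :
    bwdD N b c k = fwdD (revB N b) (revC N c) (N - 1 - k) :=
  bwdAux_eq_fwdD_revB_revC N b c _

theorem bwdS_eq_fwdS_revB_revC (ρ : ℕ → Fin n → ℝ) (k : ℕ) :
    bwdS N b c ρ k = fwdS (revB N b) (revC N c) (fun i => ρ (N - 1 - i)) (N - 1 - k) := by
  suffices ∀ j, bwdSAux N b c ρ j = fwdS (revB N b) (revC N c) (fun i => ρ (N - 1 - i)) j from
    this _
  intro j
  induction j with
  | zero => rfl
  | succ j ih =>
    rw [bwdSAux, fwdS, ih, bwdAux_eq_fwdD_revB_revC, revC, show N - (j + 1) = N - 1 - j by omega]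

variable {N} {x x' : ℕ → Fin n → ℝ}

theorem transpose_revC_mulVec (hx' : x' N = 0) (h : ∀ i < N, x' i = x (N - 1 - i)) {i : ℕ}
    (hi : i < N) : (revC N c (i + 1))ᵀ *ᵥ x' (i + 1) = subdiagMulVec c x (N - 1 - i) := by
  rw [revC, transpose_transpose]
  rcases Nat.lt_or_ge (i + 1) N with hi' | hi'
  · rw [h _ hi', show N - 1 - i = N - 1 - (i + 1) + 1 by omega, subdiagMulVec,
      show N - 1 - (i + 1) + 1 = N - (i + 1) by omega]
  · rw [show i + 1 = N by omega, hx', mulVec_zero, show N - 1 - i = 0 by omega,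
      subdiagMulVec]

theorem subdiagMulVec_revC (hx : x N = 0) (h : ∀ i < N, x' i = x (N - 1 - i)) {i : ℕ}
    (hi : i < N) :
    subdiagMulVec (revC N c) x' i = (c (N - 1 - i + 1))ᵀ *ᵥ x (N - 1 - i + 1) := by
  cases i with
  | zero => rw [subdiagMulVec, show N - 1 - 0 + 1 = N by omega, hx, mulVec_zero]
  | succ i =>
    rw [subdiagMulVec, revC, h i (by omega), show N - 1 - (i + 1) + 1 = N - (i + 1) by omega,
      show N - 1 - i = N - (i + 1) by omega]

theorem triMulVec_revB_revC (hx : x N = 0) (hx' : x' N = 0) (h : ∀ i < N, x' i = x (N - 1 - i))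
    {i : ℕ} (hi : i < N) :
    triMulVec (revB N b) (revC N c) x' i = triMulVec b c x (N - 1 - i) := by
  rw [triMulVec, triMulVec, subdiagMulVec_revC c hx h hi, transpose_revC_mulVec c hx' h hi, revB,
    h i hi]
  abel

end Reversal

section Backward

variable {N : ℕ} (b c : ℕ → Matrix (Fin n) (Fin n) ℝ)

theorem bwdS_congr {ρ ρ' : ℕ → Fin n → ℝ} {k : ℕ} (hk : k < N)
    (h : ∀ j, k ≤ j → j < N → ρ j = ρ' j) : bwdS N b c ρ k = bwdS N b c ρ' k := by
  rw [bwdS_eq_fwdS_revB_revC, bwdS_eq_fwdS_revB_revC]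
  exact fwdS_congr _ _ fun i hi => h _ (by omega) (by omega)

theorem bwdS_single {k : ℕ} (hk : k < N) (w : Fin n → ℝ) :
    bwdS N b c (Pi.single k w) k = w := by
  rw [bwdS_eq_fwdS_revB_revC, fwdS_congr _ _ (ρ' := Pi.single (N - 1 - k) w), fwdS_single]
  intro i hi
  by_cases h : i = N - 1 - k
  · rw [h, show N - 1 - (N - 1 - k) = k by omega, Pi.single_eq_same, Pi.single_eq_same]
  · rw [Pi.single_eq_of_ne (M := fun _ => Fin n → ℝ) h,
      Pi.single_eq_of_ne (M := fun _ => Fin n → ℝ) (by omega)]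

theorem bwdD_mulVec_add_eq_bwdS {x : ℕ → Fin n → ℝ} (hx : x N = 0) {k : ℕ} (hk : k < N)
    (hinv : ∀ j, k < j → j < N → IsUnit (bwdD N b c j).det) :
    bwdD N b c k *ᵥ x k + subdiagMulVec c x k = bwdS N b c (triMulVec b c x) k := by
  set x' : ℕ → Fin n → ℝ := fun i => if i < N then x (N - 1 - i) else 0
  have hx' : x' N = 0 := if_neg (lt_irrefl N)
  have h : ∀ i < N, x' i = x (N - 1 - i) := fun i hi => if_pos hi
  have hinv' : ∀ j < N - 1 - k, IsUnit (fwdD (revB N b) (revC N c) j).det := fun j hj => by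
    have := hinv (N - 1 - j) (by omega) (by omega)
    rwa [bwdD_eq_fwdD_revB_revC, show N - 1 - (N - 1 - j) = j by omega] at this
  have hxk : x k = x' (N - 1 - k) := by rw [h _ (by omega), show N - 1 - (N - 1 - k) = k by omega]
  have hsub : subdiagMulVec c x k = (revC N c (N - 1 - k + 1))ᵀ *ᵥ x' (N - 1 - k + 1) := by
    rw [transpose_revC_mulVec c hx' h (by omega), show N - 1 - (N - 1 - k) = k by omega]
  rw [bwdD_eq_fwdD_revB_revC, bwdS_eq_fwdS_revB_revC, hxk, hsub,
    fwdD_mulVec_add_eq_fwdS _ _ _ hinv']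
  exact fwdS_congr _ _ fun i hi => triMulVec_revB_revC b c hx hx' h (by omega)

theorem two_filter_mulVec {x : ℕ → Fin n → ℝ} (hx : x N = 0) {k : ℕ} (hk : k < N)
    (hfwd : ∀ j < k, IsUnit (fwdD b c j).det)
    (hbwd : ∀ j, k < j → j < N → IsUnit (bwdD N b c j).det) :
    (fwdD b c k + bwdD N b c k - b k) *ᵥ x k =
      fwdS b c (triMulVec b c x) k + bwdS N b c (triMulVec b c x) k - triMulVec b c x k := by
  rw [← fwdD_mulVec_add_eq_fwdS b c x hfwd, ← bwdD_mulVec_add_eq_bwdS b c hx hk hbwd, triMulVec,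
    sub_mulVec, add_mulVec]
  abel

end Backward

theorem sum_fin_ite_val_eq {N : ℕ} (t : ℕ) (f : ℕ → ℝ) :
    ∑ j : Fin N, (if (j : ℕ) = t then f j else 0) = if t < N then f t else 0 := by
  rw [Fin.sum_univ_eq_sum_range (fun j => if j = t then f j else 0), sum_ite_eq']
  simp only [mem_range]

section Matrix

variable {N : ℕ} {b c : ℕ → Matrix (Fin n) (Fin n) ℝ}

theorem blockTri_apply (i j : Fin N) (a β : Fin n) :
    blockTri N n b c (i, a) (j, β) =
      (if (j : ℕ) + 1 = i then c i a β else 0) + (if (j : ℕ) = i then b j a β else 0) +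
        (if (j : ℕ) = i + 1 then (c j)ᵀ a β else 0) := by
  obtain ⟨i, hi⟩ := i
  obtain ⟨j, hj⟩ := j
  unfold blockTri
  dsimp only
  split_ifs <;> grind [transpose_apply]

theorem blockTri_mulVec {x : ℕ → Fin n → ℝ} (hx : x N = 0) :
    blockTri N n b c *ᵥ (fun p => x p.1 p.2) = fun p => triMulVec b c x p.1 p.2 := by
  ext ⟨i, a⟩
  have hrow (j : Fin N) : ∑ β, blockTri N n b c (i, a) (j, β) * x j β =
      (if (j : ℕ) + 1 = i then (c i *ᵥ x j) a else 0) +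
        (if (j : ℕ) = i then (b j *ᵥ x j) a else 0) +
          (if (j : ℕ) = i + 1 then ((c j)ᵀ *ᵥ x j) a else 0) := by
    simp only [blockTri_apply]
    split_ifs <;> simp [mulVec, dotProduct, add_mul, sum_add_distrib]
  have hsub : ∑ j : Fin N, (if (j : ℕ) + 1 = i then (c i *ᵥ x j) a else 0) =
      subdiagMulVec c x i a := by
    obtain ⟨_ | i, hi⟩ := i
    · simp [subdiagMulVec]
    · simp only [Nat.add_right_cancel_iff]
      rw [sum_fin_ite_val_eq i (fun j => (c (i + 1) *ᵥ x j) a), if_pos (by omega)]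
      rfl
  have hsuper : (if (i : ℕ) + 1 < N then ((c (i + 1))ᵀ *ᵥ x (i + 1)) a else 0) =
      ((c (i + 1))ᵀ *ᵥ x (i + 1)) a := by
    split_ifs with h
    · rfl
    · simp [show (i : ℕ) + 1 = N by omega, hx]
  change ∑ q : Fin N × Fin n, blockTri N n b c (i, a) q * x q.1 q.2 = _
  rw [Fintype.sum_prod_type, sum_congr rfl fun j _ => hrow j, sum_add_distrib, sum_add_distrib,
    hsub, sum_fin_ite_val_eq (i : ℕ) (fun j => (b j *ᵥ x j) a), if_pos i.isLt,
    sum_fin_ite_val_eq ((i : ℕ) + 1) (fun j => ((c j)ᵀ *ᵥ x j) a), hsuper]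
  rfl

theorem dotProduct_blocks (x y : ℕ → Fin n → ℝ) :
    (fun p : Fin N × Fin n => x p.1 p.2) ⬝ᵥ (fun p => y p.1 p.2) =
      ∑ j ∈ range N, x j ⬝ᵥ y j := by
  rw [dotProduct, Fintype.sum_prod_type]
  exact Fin.sum_univ_eq_sum_range (fun j => x j ⬝ᵥ y j) N

theorem blockTri_revB_revC :
    (blockTri N n b c).submatrix (Prod.map Fin.rev id) (Prod.map Fin.rev id) =
      blockTri N n (revB N b) (revC N c) := by
  ext ⟨i, a⟩ ⟨j, β⟩
  simp only [submatrix_apply, Prod.map, id, blockTri_apply, Fin.val_rev, revB, revC]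
  split_ifs <;> grind [transpose_apply]

theorem isUnit_det_fwdD (hA : (blockTri N n b c).PosDef) {m : ℕ} (hm : m < N) :
    IsUnit (fwdD b c m).det := by
  induction m using Nat.strong_induction_on with
  | _ m ih =>
  have hinv : ∀ j < m, IsUnit (fwdD b c j).det := fun j hj => ih j hj (hj.trans hm)
  rw [isUnit_iff_ne_zero, Ne, ← exists_mulVec_eq_zero_iff]
  rintro ⟨v, hv, hdv⟩
  have hxN : backSubst b c m v N = 0 := backSubst_of_lt b c v hm
  have hx : (fun p : Fin N × Fin n => backSubst b c m v p.1 p.2) ≠ 0 := by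
    obtain ⟨a, ha⟩ := Function.ne_iff.mp hv
    exact Function.ne_iff.mpr ⟨(⟨m, hm⟩, a), by simpa [backSubst_self] using ha⟩
  have hpos := hA.dotProduct_mulVec_pos hx
  rw [star_trivial, blockTri_mulVec hxN, dotProduct_blocks] at hpos
  refine hpos.ne' (sum_eq_zero fun j _ => ?_)
  rcases le_or_gt j m with hj | hj
  · rw [triMulVec_backSubst b c v hinv hj, hdv, ite_self, dotProduct_zero]
  · rw [backSubst_of_lt b c v hj, zero_dotProduct]

theorem isUnit_det_bwdD (hA : (blockTri N n b c).PosDef) {k : ℕ} (hk : k < N) :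
    IsUnit (bwdD N b c k).det := by
  have hA' := hA.submatrix (Fin.rev_injective.prodMap Function.injective_id)
  rw [blockTri_revB_revC] at hA'
  exact bwdD_eq_fwdD_revB_revC N b c k ▸ isUnit_det_fwdD hA' (by omega)

theorem two_filter_of_mulVec_eq (hA : (blockTri N n b c).PosDef) {e : Fin N × Fin n → ℝ}
    {ρ : ℕ → Fin n → ℝ} (he : blockTri N n b c *ᵥ e = fun p => ρ p.1 p.2) (k : Fin N) :
    (fwdD b c k + bwdD N b c k - b k) *ᵥ (fun a => e (k, a)) =
      fwdS b c ρ k + bwdS N b c ρ k - ρ k := by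
  set x : ℕ → Fin n → ℝ := fun j => if h : j < N then fun a => e (⟨j, h⟩, a) else 0
  have hxN : x N = 0 := dif_neg (lt_irrefl N)
  have hex : e = fun p => x p.1 p.2 := by
    ext ⟨j, a⟩
    simp [x]
  have hρ : ∀ j < N, triMulVec b c x j = ρ j := fun j hj => by
    ext a
    simpa [hex, blockTri_mulVec hxN] using congrFun he (⟨j, hj⟩, a)
  have hk := k.isLt
  have hek : (fun a => e (k, a)) = x k := by simp [x]
  rw [hek, two_filter_mulVec b c hxN hk (fun j hj => isUnit_det_fwdD hA (by omega))
      (fun j _ hj => isUnit_det_bwdD hA hj),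
    fwdS_congr b c fun j hj => hρ j (by omega), bwdS_congr b c hk fun j _ hj => hρ j hj, hρ k hk]

theorem isUnit_det_two_filter (hA : (blockTri N n b c).PosDef) (k : Fin N) :
    IsUnit (fwdD b c k + bwdD N b c k - b k).det := by
  rw [← isUnit_iff_isUnit_det, ← mulVec_surjective_iff_isUnit]
  intro w
  set A := blockTri N n b c
  have hA_det : IsUnit A.det := (isUnit_iff_isUnit_det A).mp hA.isUnit
  set δ : Fin N × Fin n → ℝ := fun p =>
    Pi.single (M := fun _ => Fin n → ℝ) (k : ℕ) w p.1 p.2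
  refine ⟨fun a => (A⁻¹ *ᵥ δ) (k, a), ?_⟩
  have he : A *ᵥ (A⁻¹ *ᵥ δ) = δ := by
    rw [mulVec_mulVec, mul_nonsing_inv _ hA_det, one_mulVec]
  rw [two_filter_of_mulVec_eq hA he, fwdS_single, bwdS_single b c k.isLt, Pi.single_eq_same,
    add_sub_cancel_right]

end Matrix

end BlockTridiagonal

open BlockTridiagonal

theorem stmt13_general (N n : ℕ)
    (b c : ℕ → Matrix (Fin n) (Fin n) ℝ) (r : ℕ → Fin n → ℝ)
    (A : Matrix (Fin N × Fin n) (Fin N × Fin n) ℝ) (hAdef : A = blockTri N n b c)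
    (hA : A.PosDef)
    (e : Fin N × Fin n → ℝ) (he : A *ᵥ e = fun p => r (p.1 : ℕ) p.2) :
    ∀ k : Fin N, (fun a => e (k, a)) =
      (fwdD b c (k : ℕ) + bwdD N b c (k : ℕ) - b (k : ℕ))⁻¹ *ᵥ
        (fwdS b c r (k : ℕ) + bwdS N b c r (k : ℕ) - r (k : ℕ)) := by
  subst hAdef
  intro k
  rw [← two_filter_of_mulVec_eq hA he k, mulVec_mulVec,
    nonsing_inv_mul _ (isUnit_det_two_filter hA k), one_mulVec]

/-- **two-filter formula.** For a symmetric positive definite block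
tridiagonal system `A e = r`, each block of the solution satisfies
`e_k = (d_k^f + d_k^b − b_k)⁻¹ (s_k^f + s_k^b − r_k)`, where `d^f, s^f` and `d^b, s^b`
are the forward and backward elimination sequences. -/
theorem stmt13 (N n : ℕ) [NeZero N] [NeZero n]
    (b c : ℕ → Matrix (Fin n) (Fin n) ℝ) (r : ℕ → Fin n → ℝ)
    (A : Matrix (Fin N × Fin n) (Fin N × Fin n) ℝ) (hAdef : A = blockTri N n b c)
    (hA : A.PosDef)
    (e : Fin N × Fin n → ℝ) (he : A *ᵥ e = fun p => r (p.1 : ℕ) p.2) :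
    ∀ k : Fin N, (fun a => e (k, a)) =
      (fwdD b c (k : ℕ) + bwdD N b c (k : ℕ) - b (k : ℕ))⁻¹ *ᵥ
        (fwdS b c r (k : ℕ) + bwdS N b c r (k : ℕ) - r (k : ℕ)) :=
  stmt13_general N n b c r A hAdef hA e he
end

section
/- Let A be a symmetric positive definite block tridiagonal matrix and define matrices F and B so that FA is upper block triangular with diagonal blocks d_k^f (forward elimination) and BA is lower block triangular with diagonal blocks d_k^b (backward elimination), where F and B act as the respective sequences of elementary block row operations. Then (F + B − I)A is block diagonal with k-th diagonal block equal to d_k^f + d_k^b − b_k. -/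
open Matrix

/-- Let `A` be symmetric positive definite block tridiagonal, `F` the
forward-elimination matrix (so `F*A` is upper block triangular with diagonal blocks `df k`
and the same superdiagonal blocks as `A`) and `B` the backward-elimination matrix (so
`B*A` is lower block triangular with diagonal blocks `db k` and the same subdiagonal
blocks as `A`). Then `(F + B − I) * A` is block diagonal with `k`-th diagonal block
`df k + db k − b k`. -/
theorem stmt19 (N n : ℕ) [NeZero N] [NeZero n]
    (b c : ℕ → Matrix (Fin n) (Fin n) ℝ)
    (A : Matrix (Fin N × Fin n) (Fin N × Fin n) ℝ) (hAdef : A = blockTri N n b c)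
    (hA : A.PosDef)
    (F B : Matrix (Fin N × Fin n) (Fin N × Fin n) ℝ)
    (df db : Fin N → Matrix (Fin n) (Fin n) ℝ)
    (hFlow : ∀ p r : Fin N × Fin n, (r.1 : ℕ) < (p.1 : ℕ) → (F * A) p r = 0)
    (hFdiag : ∀ p r : Fin N × Fin n, p.1 = r.1 → (F * A) p r = df p.1 p.2 r.2)
    (hFup : ∀ p r : Fin N × Fin n, (p.1 : ℕ) < (r.1 : ℕ) → (F * A) p r = A p r)
    (hBup : ∀ p r : Fin N × Fin n, (p.1 : ℕ) < (r.1 : ℕ) → (B * A) p r = 0)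
    (hBdiag : ∀ p r : Fin N × Fin n, p.1 = r.1 → (B * A) p r = db p.1 p.2 r.2)
    (hBlow : ∀ p r : Fin N × Fin n, (r.1 : ℕ) < (p.1 : ℕ) → (B * A) p r = A p r) :
    ∀ p r : Fin N × Fin n, ((F + B - 1) * A) p r =
      if p.1 = r.1 then (df p.1 + db p.1 - b (p.1 : ℕ)) p.2 r.2 else 0 := by
  intro p r
  have h1 : ((F + B - 1) * A) p r = (F * A) p r + (B * A) p r - A p r := by
    simp [Matrix.add_mul, Matrix.sub_mul, Matrix.one_mul, Matrix.add_apply,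
      Matrix.sub_apply]
  rw [h1]
  rcases lt_trichotomy (p.1 : ℕ) (r.1 : ℕ) with h | h | h
  · rw [hFup p r h, hBup p r h, if_neg (by intro he; rw [he] at h; exact lt_irrefl _ h)]
    ring
  · have he : p.1 = r.1 := Fin.ext h
    rw [hFdiag p r he, hBdiag p r he, if_pos he, hAdef]
    simp [blockTri, he, Matrix.sub_apply, Matrix.add_apply]
  · rw [hFlow p r h, hBlow p r h, if_neg (by intro he; rw [he] at h; exact lt_irrefl _ h)]
    ring
end
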